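/- The Miller–Tucker–Zemlin constraints eliminate subtours: if x : V × V → {0,1} encodes a set of arcs and there exist position variables U : V → ℝ with U_i − U_j + 1 ≤ (|V| − 1)(1 − x_{ij}) for all i, j in V \ {1}, then the arc set restricted to V \ {1} contains no directed cycle. -/

import Mathlib

/-- The MTZ constraints eliminate directed cycles among non-depot nodes. -/
theorem stmt1 {V : Type*} [Fintype V] (one : V)
    (x : V → V → ℝ) (U : V → ℝ)
    (hx : ∀ i j, x i j = 0 ∨ x i j = 1)
    (hmtz : ∀ i j, i ≠ one → j ≠ one →
      U i - U j + 1 ≤ ((Fintype.card V : ℝ) - 1) * (1 - x i j)) :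
    ∀ l : List V, l ≠ [] → l.Nodup → (∀ v ∈ l, v ≠ one) →
      l.Chain' (fun a b => x a b = 1) →
      ∀ a b, l.head? = some a → l.getLast? = some b → x b a ≠ 1 := by
  have key : ∀ i j, i ≠ one → j ≠ one → x i j = 1 → U i < U j := by
    intro i j hi hj hx1
    have h := hmtz i j hi hj
    rw [hx1] at h
    simp at h
    linarith
  have mon : ∀ l : List V, (∀ v ∈ l, v ≠ one) → l.Chain' (fun a b => x a b = 1) →
      ∀ a b, l.head? = some a → l.getLast? = some b → U a ≤ U b := by
    intro l
    induction l with
    | nil => simp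
    | cons c t ih =>
      intro hnot hch a b ha hb
      match t with
      | [] =>
        simp at ha hb
        subst ha; subst hb; exact le_refl _
      | d :: t' =>
        simp at ha; subst ha
        replace hch := List.isChain_cons_cons.mp hch
        have hcd : x c d = 1 := hch.1
        have h1 : U c < U d :=
          key c d (hnot c (by simp)) (hnot d (by simp)) hcd
        have h2 : U d ≤ U b := by
          apply ih (fun v hv => hnot v (List.mem_cons_of_mem _ hv)) hch.2
          · simp
          · rw [List.getLast?_cons_cons] at hb; exact hb
        linarith
  intro l hne hnd hnot hch a b ha hb hxba
  have hUa : U a ≤ U b := mon l hnot hch a b ha hb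
  have haone : a ≠ one := hnot a (List.mem_of_mem_head? ha)
  have hbone : b ≠ one := hnot b (List.mem_of_mem_getLast? hb)
  have := key b a hbone haone hxba
  linarith
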